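/- arXiv:1906.01338 — 5 statements merged into one kernel-verified Lean document; each statement's English description precedes it below -/
import Mathlib

section
/- Let β ∈ (0,1), τ > 0, and u, v ∈ C¹([0,τ]). Then ∫₀^τ (∂^β_{(0,t]} u(t)) (v(t) − v(τ)) dt = ∫₀^τ (∂^β_{[t,τ)} v(t)) (u(t) − u(0)) dt, where ∂^β_{(0,t]} u(t) = (1/Γ(1−β)) ∫₀ᵗ u'(s)(t−s)^{−β} ds is the forward Caputo derivative and ∂^β_{[t,τ)} v(t) = −(1/Γ(1−β)) ∫ₜ^τ v'(s)(s−t)^{−β} ds is the backward Caputo derivative. -/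
open Set MeasureTheory Real

/-!
Writing `v t - v τ = -∫_t^τ v'` and `u t - u 0 = ∫_0^t u'`, each side becomes `-1/Γ(1-β)`
times a triple integral of `u'(s) v'(r)` against a kernel over `0 < s < t < r < τ`: the kernel
is `(t - s)^(-β)` on the left and `(r - t)^(-β)` on the right. Integrating out the middle
variable `t` turns both kernels into `(r - s)^(1-β) / (1-β)`, so the two sides agree. Every
interchange of integrals is Fubini on a triangle, justified because `x^(-β)` is integrable
near `0` for `β < 1`.
-/

def triangle (a b : ℝ) : Set (ℝ × ℝ) := {p | a < p.1 ∧ p.1 < p.2 ∧ p.2 < b}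

section Triangle

variable {E : Type*} [NormedAddCommGroup E] {a b : ℝ}

theorem measurableSet_triangle : MeasurableSet (triangle a b) :=
  (measurableSet_lt measurable_const measurable_fst).inter
    ((measurableSet_lt measurable_fst measurable_snd).inter
      (measurableSet_lt measurable_snd measurable_const))

theorem triangle_subset_Ioo_prod_Ioo : triangle a b ⊆ Ioo a b ×ˢ Ioo a b :=
  fun _ ⟨h₁, h₂, h₃⟩ => ⟨⟨h₁, h₂.trans h₃⟩, h₁.trans h₂, h₃⟩

theorem triangle_mono {a' b' : ℝ} (ha : a ≤ a') (hb : b' ≤ b) :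
    triangle a' b' ⊆ triangle a b :=
  fun _ ⟨h₁, h₂, h₃⟩ => ⟨ha.trans_lt h₁, h₂, h₃.trans_le hb⟩

theorem integrable_indicator_triangle {F : ℝ → ℝ → E}
    (hF : IntegrableOn (Function.uncurry F) (triangle a b)) :
    Integrable ((triangle a b).indicator (Function.uncurry F)) (volume.prod volume) := by
  rw [← Measure.volume_eq_prod]
  exact (integrable_indicator_iff measurableSet_triangle).2 hF

variable [NormedSpace ℝ E]

theorem integral_indicator_triangle_fst (F : ℝ → ℝ → E) (t : ℝ) :
    ∫ s, (triangle a b).indicator (Function.uncurry F) (s, t)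
      = (Ioo a b).indicator (fun t => ∫ s in Ioo a t, F s t) t := by
  by_cases ht : t ∈ Ioo a b
  · rw [indicator_of_mem ht, ← integral_indicator measurableSet_Ioo]
    congr 1 with s
    simp only [indicator_apply, triangle, mem_Ioo, Function.uncurry_apply_pair]
    congr 1
    exact propext ⟨fun h => ⟨h.1, h.2.1⟩, fun h => ⟨h.1, h.2, ht.2⟩⟩
  · rw [indicator_of_notMem ht]
    refine integral_eq_zero_of_ae (ae_of_all _ fun s => indicator_of_notMem ?_ _)
    exact fun h => ht ⟨h.1.trans h.2.1, h.2.2⟩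

theorem integral_indicator_triangle_snd (F : ℝ → ℝ → E) (s : ℝ) :
    ∫ t, (triangle a b).indicator (Function.uncurry F) (s, t)
      = (Ioo a b).indicator (fun s => ∫ t in Ioo s b, F s t) s := by
  by_cases hs : s ∈ Ioo a b
  · rw [indicator_of_mem hs, ← integral_indicator measurableSet_Ioo]
    congr 1 with t
    simp only [indicator_apply, triangle, mem_Ioo, Function.uncurry_apply_pair]
    congr 1
    exact propext ⟨fun h => ⟨h.2.1, h.2.2⟩, fun h => ⟨hs.1, h.1, h.2⟩⟩
  · rw [indicator_of_notMem hs]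
    refine integral_eq_zero_of_ae (ae_of_all _ fun t => indicator_of_notMem ?_ _)
    exact fun h => hs ⟨h.1, h.2.1.trans h.2.2⟩

theorem integral_triangle_swap {F : ℝ → ℝ → E}
    (hF : IntegrableOn (Function.uncurry F) (triangle a b)) :
    ∫ t in Ioo a b, ∫ s in Ioo a t, F s t = ∫ s in Ioo a b, ∫ t in Ioo s b, F s t := by
  have := integral_integral_swap
    (f := fun s t => (triangle a b).indicator (Function.uncurry F) (s, t))
    (integrable_indicator_triangle hF)
  simp only [integral_indicator_triangle_fst, integral_indicator_triangle_snd,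
    integral_indicator measurableSet_Ioo] at this
  exact this.symm

theorem MeasureTheory.IntegrableOn.integral_triangle_fst {F : ℝ → ℝ → E}
    (hF : IntegrableOn (Function.uncurry F) (triangle a b)) :
    IntegrableOn (fun t => ∫ s in Ioo a t, F s t) (Ioo a b) := by
  have := (integrable_indicator_triangle hF).integral_prod_right
  simp only [integral_indicator_triangle_fst] at this
  exact (integrable_indicator_iff measurableSet_Ioo).1 this

theorem MeasureTheory.IntegrableOn.integral_triangle_snd {F : ℝ → ℝ → E}
    (hF : IntegrableOn (Function.uncurry F) (triangle a b)) :
    IntegrableOn (fun s => ∫ t in Ioo s b, F s t) (Ioo a b) := by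
  have := (integrable_indicator_triangle hF).integral_prod_left
  simp only [integral_indicator_triangle_snd] at this
  exact (integrable_indicator_iff measurableSet_Ioo).1 this

theorem MeasureTheory.IntegrableOn.mul_prod_triangle {f g : ℝ → ℝ}
    (hf : IntegrableOn f (Ioo a b)) (hg : IntegrableOn g (Ioo a b)) :
    IntegrableOn (Function.uncurry fun s t => f s * g t) (triangle a b) := by
  refine IntegrableOn.mono_set ?_ triangle_subset_Ioo_prod_Ioo
  rw [IntegrableOn, Measure.volume_eq_prod, ← Measure.prod_restrict]
  exact hf.mul_prod hg

end Triangle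

section Kernel

variable {γ a b : ℝ}

theorem integrable_indicator_Ioo_rpow_neg (hγ : γ < 1) (c : ℝ) :
    Integrable ((Ioo 0 c).indicator fun x : ℝ => x ^ (-γ)) := by
  rcases le_or_gt c 0 with hc | hc
  · simp [Ioo_eq_empty_of_le hc]
  · exact (integrable_indicator_iff measurableSet_Ioo).2
      ((intervalIntegral.integrableOn_Ioo_rpow_iff hc).2 (by linarith))

theorem MeasureTheory.IntegrableOn.mul_rpow_sub_triangle_fst {U : ℝ → ℝ} (hγ : γ < 1)
    (hU : IntegrableOn U (Ioo a b)) :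
    IntegrableOn (Function.uncurry fun s t => U s * (t - s) ^ (-γ)) (triangle a b) := by
  -- on the triangle this is the convolution integrand of `U` and the kernel cut off to `(0, b - a)`
  have h := ((integrable_indicator_iff measurableSet_Ioo).2 hU).convolution_integrand
    (ContinuousLinearMap.mul ℝ ℝ) (integrable_indicator_Ioo_rpow_neg hγ (b - a))
  rw [← Measure.volume_eq_prod] at h
  refine h.swap.integrableOn.congr_fun (fun p ⟨h₁, h₂, h₃⟩ => ?_) measurableSet_triangle
  simp only [Function.uncurry_def, Function.comp_apply, Prod.fst_swap, Prod.snd_swap,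
    ContinuousLinearMap.mul_apply']
  have hs : p.1 ∈ Ioo a b := ⟨h₁, h₂.trans h₃⟩
  have hk : p.2 - p.1 ∈ Ioo 0 (b - a) := ⟨by linarith, by linarith⟩
  rw [indicator_of_mem hs, indicator_of_mem hk]

theorem MeasureTheory.IntegrableOn.mul_rpow_sub_triangle_snd {V : ℝ → ℝ} (hγ : γ < 1)
    (hV : IntegrableOn V (Ioo a b)) :
    IntegrableOn (Function.uncurry fun t r => V r * (r - t) ^ (-γ)) (triangle a b) := by
  have h := ((integrable_indicator_iff measurableSet_Ioo).2 hV).convolution_integrand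
    (ContinuousLinearMap.mul ℝ ℝ) (integrable_indicator_Ioo_rpow_neg hγ (b - a)).comp_neg
  rw [← Measure.volume_eq_prod] at h
  refine h.integrableOn.congr_fun (fun p ⟨h₁, h₂, h₃⟩ => ?_) measurableSet_triangle
  simp only [Function.uncurry_def, ContinuousLinearMap.mul_apply', neg_sub]
  have hs : p.2 ∈ Ioo a b := ⟨h₁.trans h₂, h₃⟩
  have hk : p.2 - p.1 ∈ Ioo 0 (b - a) := ⟨by linarith, by linarith⟩
  rw [indicator_of_mem hs, indicator_of_mem hk]

theorem integral_Ioo_sub_rpow_neg (hγ : γ < 1) (hab : a ≤ b) :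
    ∫ t in Ioo a b, (t - a) ^ (-γ) = (b - a) ^ (1 - γ) / (1 - γ) := by
  rw [← integral_Ioc_eq_integral_Ioo, ← intervalIntegral.integral_of_le hab,
    intervalIntegral.integral_comp_sub_right (· ^ (-γ)), integral_rpow (Or.inl (by linarith)),
    sub_self, zero_rpow (by linarith), sub_zero, neg_add_eq_sub]

theorem integral_Ioo_rpow_neg_sub (hγ : γ < 1) (hab : a ≤ b) :
    ∫ t in Ioo a b, (b - t) ^ (-γ) = (b - a) ^ (1 - γ) / (1 - γ) := by
  rw [← integral_Ioc_eq_integral_Ioo, ← intervalIntegral.integral_of_le hab,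
    intervalIntegral.integral_comp_sub_left (· ^ (-γ)), integral_rpow (Or.inl (by linarith)),
    sub_self, zero_rpow (by linarith), sub_zero, neg_add_eq_sub]

end Kernel

/- `rpowConvLeft β 0 u'` and `-rpowConvRight β τ v'` are the forward and backward Caputo
derivatives of `u` and `v`, up to the factor `1 / Γ(1 - β)`. -/
noncomputable def rpowConvLeft (γ a : ℝ) (f : ℝ → ℝ) (t : ℝ) : ℝ :=
  ∫ s in Ioo a t, f s * (t - s) ^ (-γ)

noncomputable def rpowConvRight (γ b : ℝ) (f : ℝ → ℝ) (t : ℝ) : ℝ :=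
  ∫ s in Ioo t b, f s * (s - t) ^ (-γ)

section Pairing

variable {γ a b : ℝ} {U V : ℝ → ℝ}

theorem MeasureTheory.IntegrableOn.mul_prod_mul_rpow_sub_triangle {δ : ℝ} (hδ : 0 ≤ δ)
    (hU : IntegrableOn U (Ioo a b)) (hV : IntegrableOn V (Ioo a b)) :
    IntegrableOn (Function.uncurry fun s r => U s * V r * (r - s) ^ δ) (triangle a b) := by
  refine (hU.mul_prod_triangle hV).mul_bdd (c := (b - a) ^ δ)
    ((measurable_snd.sub measurable_fst).pow_const δ).aestronglyMeasurable
    (ae_restrict_of_forall_mem measurableSet_triangle fun p ⟨h₁, h₂, h₃⟩ => ?_)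
  rw [norm_of_nonneg (rpow_nonneg (by linarith) δ)]
  exact rpow_le_rpow (by linarith) (by linarith) hδ

theorem integral_rpowConvLeft_mul_integral (hγ : γ < 1) (hU : IntegrableOn U (Ioo a b))
    (hV : IntegrableOn V (Ioo a b)) :
    ∫ t in Ioo a b, rpowConvLeft γ a U t * ∫ r in Ioo t b, V r
      = ∫ r in Ioo a b, ∫ s in Ioo a r, U s * V r * (r - s) ^ (1 - γ) / (1 - γ) := by
  have hUk := hU.mul_rpow_sub_triangle_fst hγ
  calc ∫ t in Ioo a b, rpowConvLeft γ a U t * ∫ r in Ioo t b, V r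
      = ∫ t in Ioo a b, ∫ r in Ioo t b, rpowConvLeft γ a U t * V r := by
        simp only [integral_const_mul]
    _ = ∫ r in Ioo a b, ∫ t in Ioo a r, rpowConvLeft γ a U t * V r :=
        (integral_triangle_swap (hUk.integral_triangle_fst.mul_prod_triangle hV)).symm
    _ = ∫ r in Ioo a b, ∫ s in Ioo a r, U s * V r * (r - s) ^ (1 - γ) / (1 - γ) := by
        refine setIntegral_congr_fun measurableSet_Ioo fun r hr => ?_
        simp only [integral_mul_const, rpowConvLeft]
        rw [integral_triangle_swap (hUk.mono_set (triangle_mono le_rfl hr.2.le)),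
          ← integral_mul_const]
        refine setIntegral_congr_fun measurableSet_Ioo fun s hs => ?_
        simp only [integral_const_mul, integral_Ioo_sub_rpow_neg hγ hs.2.le]
        ring

theorem integral_rpowConvRight_mul_integral (hγ : γ < 1) (hU : IntegrableOn U (Ioo a b))
    (hV : IntegrableOn V (Ioo a b)) :
    ∫ t in Ioo a b, rpowConvRight γ b V t * ∫ s in Ioo a t, U s
      = ∫ s in Ioo a b, ∫ r in Ioo s b, U s * V r * (r - s) ^ (1 - γ) / (1 - γ) := by
  have hVk := hV.mul_rpow_sub_triangle_snd hγ
  calc ∫ t in Ioo a b, rpowConvRight γ b V t * ∫ s in Ioo a t, U s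
      = ∫ t in Ioo a b, ∫ s in Ioo a t, U s * rpowConvRight γ b V t := by
        simp only [integral_mul_const, mul_comm]
    _ = ∫ s in Ioo a b, ∫ t in Ioo s b, U s * rpowConvRight γ b V t :=
        integral_triangle_swap (hU.mul_prod_triangle hVk.integral_triangle_snd)
    _ = ∫ s in Ioo a b, ∫ r in Ioo s b, U s * V r * (r - s) ^ (1 - γ) / (1 - γ) := by
        refine setIntegral_congr_fun measurableSet_Ioo fun s hs => ?_
        rw [integral_const_mul]
        simp only [rpowConvRight]
        rw [← integral_triangle_swap (hVk.mono_set (triangle_mono hs.1.le le_rfl)),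
          ← integral_const_mul]
        refine setIntegral_congr_fun measurableSet_Ioo fun r hr => ?_
        rw [integral_const_mul, integral_Ioo_rpow_neg_sub hγ hr.1.le]
        ring

theorem integral_rpowConvLeft_mul_eq_integral_rpowConvRight_mul (hγ : γ < 1)
    (hU : IntegrableOn U (Ioo a b)) (hV : IntegrableOn V (Ioo a b)) :
    ∫ t in Ioo a b, rpowConvLeft γ a U t * ∫ r in Ioo t b, V r
      = ∫ t in Ioo a b, rpowConvRight γ b V t * ∫ s in Ioo a t, U s := by
  rw [integral_rpowConvLeft_mul_integral hγ hU hV, integral_rpowConvRight_mul_integral hγ hU hV]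
  exact integral_triangle_swap
    ((hU.mul_prod_mul_rpow_sub_triangle (by linarith) hV).div_const (1 - γ))

end Pairing

theorem integral_Ioo_eq_sub_of_hasDerivAt {f f' : ℝ → ℝ} {a b : ℝ} (hab : a ≤ b)
    (hf : ∀ x ∈ Icc a b, HasDerivAt f (f' x) x) (hf' : IntegrableOn f' (Icc a b)) :
    ∫ x in Ioo a b, f' x = f b - f a := by
  rw [← integral_Ioc_eq_integral_Ioo, ← intervalIntegral.integral_of_le hab]
  exact intervalIntegral.integral_eq_sub_of_hasDerivAt (by rwa [uIcc_of_le hab])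
    ((intervalIntegrable_iff_integrableOn_Icc_of_le hab).2 hf')

theorem caputo_int_by_parts_general (β τ : ℝ) (hβ : β ∈ Set.Ioo (0:ℝ) 1)
    (u v u' v' : ℝ → ℝ)
    (hu : ∀ t ∈ Set.Icc 0 τ, HasDerivAt u (u' t) t)
    (hu' : ContinuousOn u' (Set.Icc 0 τ))
    (hv : ∀ t ∈ Set.Icc 0 τ, HasDerivAt v (v' t) t)
    (hv' : ContinuousOn v' (Set.Icc 0 τ)) :
    (∫ t in Set.Ioo 0 τ,
        ((1 / Real.Gamma (1 - β)) * ∫ s in Set.Ioo 0 t, u' s * (t - s) ^ (-β))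
          * (v t - v τ))
      = ∫ t in Set.Ioo 0 τ,
          (-(1 / Real.Gamma (1 - β)) * ∫ s in Set.Ioo t τ, v' s * (s - t) ^ (-β))
            * (u t - u 0) := by
  have hu'i : IntegrableOn u' (Icc 0 τ) := hu'.integrableOn_Icc
  have hv'i : IntegrableOn v' (Icc 0 τ) := hv'.integrableOn_Icc
  have hv_sub : ∀ t ∈ Ioo 0 τ, v t - v τ = -∫ r in Ioo t τ, v' r := fun t ht => by
    rw [integral_Ioo_eq_sub_of_hasDerivAt ht.2.le (fun x hx => hv x ⟨ht.1.le.trans hx.1, hx.2⟩)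
      (hv'i.mono_set (Icc_subset_Icc ht.1.le le_rfl))]
    ring
  have hu_sub : ∀ t ∈ Ioo 0 τ, u t - u 0 = ∫ s in Ioo 0 t, u' s := fun t ht =>
    (integral_Ioo_eq_sub_of_hasDerivAt ht.1.le (fun x hx => hu x ⟨hx.1, hx.2.trans ht.2.le⟩)
      (hu'i.mono_set (Icc_subset_Icc le_rfl ht.2.le))).symm
  calc _ = -(1 / Gamma (1 - β)) *
        ∫ t in Ioo 0 τ, rpowConvLeft β 0 u' t * ∫ r in Ioo t τ, v' r := by
        rw [← integral_const_mul]
        refine setIntegral_congr_fun measurableSet_Ioo fun t ht => ?_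
        simp only [rpowConvLeft, hv_sub t ht]
        ring
    _ = -(1 / Gamma (1 - β)) *
        ∫ t in Ioo 0 τ, rpowConvRight β τ v' t * ∫ s in Ioo 0 t, u' s := by
        rw [integral_rpowConvLeft_mul_eq_integral_rpowConvRight_mul hβ.2
          (hu'i.mono_set Ioo_subset_Icc_self) (hv'i.mono_set Ioo_subset_Icc_self)]
    _ = _ := by
        rw [← integral_const_mul]
        refine setIntegral_congr_fun measurableSet_Ioo fun t ht => ?_
        simp only [rpowConvRight, hu_sub t ht]
        ring

/-- Integration by parts formula relating forward and backward Caputo derivatives: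
`∫₀^τ (∂^β_{(0,t]}u)(t)(v(t)−v(τ)) dt = ∫₀^τ (∂^β_{[t,τ)}v)(t)(u(t)−u(0)) dt`. -/
theorem caputo_int_by_parts (β τ : ℝ) (hβ : β ∈ Set.Ioo (0:ℝ) 1) (hτ : 0 < τ)
    (u v u' v' : ℝ → ℝ)
    (hu : ∀ t ∈ Set.Icc 0 τ, HasDerivAt u (u' t) t)
    (hu' : ContinuousOn u' (Set.Icc 0 τ))
    (hv : ∀ t ∈ Set.Icc 0 τ, HasDerivAt v (v' t) t)
    (hv' : ContinuousOn v' (Set.Icc 0 τ)) :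
    (∫ t in Set.Ioo 0 τ,
        ((1 / Real.Gamma (1 - β)) * ∫ s in Set.Ioo 0 t, u' s * (t - s) ^ (-β))
          * (v t - v τ))
      = ∫ t in Set.Ioo 0 τ,
          (-(1 / Real.Gamma (1 - β)) * ∫ s in Set.Ioo t τ, v' s * (s - t) ^ (-β))
            * (u t - u 0) :=
  caputo_int_by_parts_general β τ hβ u v u' v' hu hu' hv hv'
end

section
/- Let β ∈ (0,1), τ > 0, and u, v ∈ C¹([0,τ]). Then ∫₀^τ v(t) ∂^β_{(0,t]} u(t) dt + u(0) (I^{1−β}_{[0,τ)} v)(0) = ∫₀^τ u(t) ∂^β_{[t,τ)} v(t) dt + v(τ) (I^{1−β}_{(0,τ]} u)(τ), where (I^{1−β}_{(0,t]} u)(t) = (1/Γ(1−β)) ∫₀ᵗ u(s)(t−s)^{−β} ds and (I^{1−β}_{(t,τ]} v)(t) = (1/Γ(1−β)) ∫ₜ^τ v(s)(s−t)^{−β} ds. -/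
open Set MeasureTheory Real

/-!
Both sides are built from Riemann–Liouville integrals with kernel `(t - s) ^ (-β)`. Exchanging
the order of integration over the triangle `0 < s < t < τ` moves the kernel from one factor to
the other, and an ordinary integration by parts writes the Riemann–Liouville integral of a `C¹`
function as a boundary term plus the integral of one order higher, kernel `(t - s) ^ (1 - β)`, of
its derivative. After these steps both sides equal
`(u 0 * v τ * τ ^ (1 - β) + v τ * ∫ u' (τ - s) ^ (1 - β) - u 0 * ∫ v' r ^ (1 - β)
  - ∬_{s < r} u' s * v' r * (r - s) ^ (1 - β)) / ((1 - β) * Γ(1 - β))`.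
-/

namespace RiemannLiouville

def triangle (a b : ℝ) : Set (ℝ × ℝ) := {p | a < p.1 ∧ p.1 < p.2 ∧ p.2 < b}

section Triangle

variable {a b : ℝ}

theorem measurableSet_triangle : MeasurableSet (triangle a b) :=
  (measurableSet_lt measurable_const measurable_fst).inter
    ((measurableSet_lt measurable_fst measurable_snd).inter
      (measurableSet_lt measurable_snd measurable_const))

theorem triangle_subset_Icc_prod : triangle a b ⊆ Icc a b ×ˢ Icc a b := by
  rintro ⟨s, t⟩ ⟨has, hst, htb⟩
  exact ⟨⟨has.le, (hst.trans htb).le⟩, ⟨(has.trans hst).le, htb.le⟩⟩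

theorem integral_indicator_triangle_fst (H : ℝ → ℝ → ℝ) (s : ℝ) :
    ∫ t, (triangle a b).indicator (Function.uncurry H) (s, t)
      = (Ioo a b).indicator (fun s => ∫ t in Ioo s b, H s t) s := by
  by_cases hs : s ∈ Ioo a b
  · rw [indicator_of_mem hs, ← integral_indicator measurableSet_Ioo]
    congr 1 with t
    simp only [indicator_apply, triangle, mem_ofPred_eq, mem_Ioo, Function.uncurry_apply_pair]
    grind
  · rw [indicator_of_notMem hs, ← integral_zero ℝ ℝ]
    congr 1 with t
    simp only [indicator_apply, triangle, mem_ofPred_eq]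
    grind

theorem integral_indicator_triangle_snd (H : ℝ → ℝ → ℝ) (t : ℝ) :
    ∫ s, (triangle a b).indicator (Function.uncurry H) (s, t)
      = (Ioo a b).indicator (fun t => ∫ s in Ioo a t, H s t) t := by
  by_cases ht : t ∈ Ioo a b
  · rw [indicator_of_mem ht, ← integral_indicator measurableSet_Ioo]
    congr 1 with s
    simp only [indicator_apply, triangle, mem_ofPred_eq, mem_Ioo, Function.uncurry_apply_pair]
    grind
  · rw [indicator_of_notMem ht, ← integral_zero ℝ ℝ]
    congr 1 with s
    simp only [indicator_apply, triangle, mem_ofPred_eq]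
    grind

variable {H : ℝ → ℝ → ℝ} (hH : IntegrableOn (Function.uncurry H) (triangle a b))
include hH

theorem integral_Ioo_Ioo_swap :
    ∫ t in Ioo a b, ∫ s in Ioo a t, H s t = ∫ s in Ioo a b, ∫ t in Ioo s b, H s t := by
  have h := (integrable_indicator_iff measurableSet_triangle).2 hH
  rw [← integral_indicator measurableSet_Ioo, ← integral_indicator measurableSet_Ioo]
  simp_rw [← integral_indicator_triangle_fst, ← integral_indicator_triangle_snd]
  exact (integral_integral_swap
    (f := fun s t => (triangle a b).indicator (Function.uncurry H) (s, t)) h).symm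

theorem integrableOn_integral_Ioo_right :
    IntegrableOn (fun s => ∫ t in Ioo s b, H s t) (Ioo a b) := by
  rw [← integrable_indicator_iff measurableSet_Ioo,
    ← funext (integral_indicator_triangle_fst H)]
  exact ((integrable_indicator_iff measurableSet_triangle).2 hH).integral_prod_left

theorem integrableOn_integral_Ioo_left :
    IntegrableOn (fun t => ∫ s in Ioo a t, H s t) (Ioo a b) := by
  rw [← integrable_indicator_iff measurableSet_Ioo,
    ← funext (integral_indicator_triangle_snd H)]
  exact ((integrable_indicator_iff measurableSet_triangle).2 hH).integral_prod_right

end Triangle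

theorem integrableOn_triangle_rpow_sub {γ : ℝ} (hγ : -1 < γ) (a b : ℝ) :
    IntegrableOn (fun p : ℝ × ℝ => (p.2 - p.1) ^ γ) (triangle a b) := by
  have hker : Integrable ((Ioo 0 (b - a)).indicator fun x : ℝ => x ^ γ) := by
    rcases le_or_gt (b - a) 0 with h | h
    · simp [Ioo_eq_empty_of_le h]
    · exact (integrable_indicator_iff measurableSet_Ioo).2
        ((intervalIntegral.integrableOn_Ioo_rpow_iff h).2 hγ)
  have hbox : Integrable ((Ioo a b).indicator fun _ : ℝ => (1 : ℝ)) :=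
    (integrable_indicator_iff measurableSet_Ioo).2 (integrableOn_const measure_Ioo_lt_top.ne)
  -- on the triangle, the kernel is the convolution integrand of these two integrable functions
  have hconv := (hbox.convolution_integrand (ContinuousLinearMap.mul ℝ ℝ) hker).swap
  refine hconv.integrableOn.congr_fun ?_ measurableSet_triangle
  rintro ⟨s, t⟩ ⟨has, hst, htb⟩
  simp [indicator_of_mem (show s ∈ Ioo a b from ⟨has, hst.trans htb⟩),
    indicator_of_mem (show t - s ∈ Ioo 0 (b - a) from ⟨by linarith, by linarith⟩)]

theorem integrableOn_triangle_mul_rpow_sub {γ a b : ℝ} (hγ : -1 < γ) {f g : ℝ → ℝ}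
    (hf : ContinuousOn f (Icc a b)) (hg : ContinuousOn g (Icc a b)) :
    IntegrableOn (Function.uncurry fun s t => f s * (g t * (t - s) ^ γ)) (triangle a b) := by
  have hfg : ContinuousOn (fun p : ℝ × ℝ => f p.1 * g p.2) (Icc a b ×ˢ Icc a b) :=
    (hf.comp continuousOn_fst fun _ hp => hp.1).mul (hg.comp continuousOn_snd fun _ hp => hp.2)
  refine ((integrableOn_triangle_rpow_sub hγ a b).continuousOn_mul_of_subset hfg
    (isCompact_Icc.prod isCompact_Icc) measurableSet_triangle triangle_subset_Icc_prod).congr_fun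
    (fun p _ => by simp only [Function.uncurry]; ring) measurableSet_triangle

/-- `Γ(γ + 1) • I^{γ+1}_{(a,t]} f (t)`: the forward Riemann–Liouville integral of order `γ + 1`
without its normalising factor. -/
noncomputable def forwardRLIntegral (γ a : ℝ) (f : ℝ → ℝ) (t : ℝ) : ℝ :=
  ∫ s in Ioo a t, f s * (t - s) ^ γ

/-- `Γ(γ + 1) • I^{γ+1}_{[s,b)} g (s)`: the backward Riemann–Liouville integral of order `γ + 1`
without its normalising factor. -/
noncomputable def backwardRLIntegral (γ b : ℝ) (g : ℝ → ℝ) (s : ℝ) : ℝ :=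
  ∫ t in Ioo s b, g t * (t - s) ^ γ

section RLIntegral

variable {γ a b : ℝ} {f g : ℝ → ℝ}

theorem integral_mul_forwardRLIntegral (hγ : -1 < γ) (hf : ContinuousOn f (Icc a b))
    (hg : ContinuousOn g (Icc a b)) :
    ∫ t in Ioo a b, g t * forwardRLIntegral γ a f t
      = ∫ s in Ioo a b, f s * backwardRLIntegral γ b g s := by
  have h := integral_Ioo_Ioo_swap (integrableOn_triangle_mul_rpow_sub hγ hf hg)
  simp only [forwardRLIntegral, backwardRLIntegral, ← integral_const_mul]
  simp_rw [mul_left_comm (g _)]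
  exact h

theorem integrableOn_mul_forwardRLIntegral (hγ : -1 < γ) (hf : ContinuousOn f (Icc a b))
    (hg : ContinuousOn g (Icc a b)) :
    IntegrableOn (fun t => g t * forwardRLIntegral γ a f t) (Ioo a b) := by
  have h := integrableOn_integral_Ioo_left (integrableOn_triangle_mul_rpow_sub hγ hf hg)
  simp_rw [mul_left_comm (f _), integral_const_mul] at h
  exact h

theorem integrableOn_mul_backwardRLIntegral (hγ : -1 < γ) (hf : ContinuousOn f (Icc a b))
    (hg : ContinuousOn g (Icc a b)) :
    IntegrableOn (fun s => f s * backwardRLIntegral γ b g s) (Ioo a b) := by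
  have h := integrableOn_integral_Ioo_right (integrableOn_triangle_mul_rpow_sub hγ hf hg)
  simp_rw [integral_const_mul] at h
  exact h

theorem forwardRLIntegral_eq_of_hasDerivAt (hγ : -1 < γ) (hab : a ≤ b) {f' : ℝ → ℝ}
    (hf : ∀ x ∈ Icc a b, HasDerivAt f (f' x) x) (hf' : ContinuousOn f' (Icc a b)) :
    forwardRLIntegral γ a f b
      = (f a * (b - a) ^ (γ + 1) + forwardRLIntegral (γ + 1) a f' b) / (γ + 1) := by
  have hγ1 : γ + 1 ≠ 0 := by linarith
  have hIoo : Ioo (min a b) (max a b) = Ioo a b := by rw [min_eq_left hab, max_eq_right hab]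
  -- an antiderivative of the kernel that vanishes at `b`, so only the boundary term at `a` survives
  have hw : ∀ x ∈ Ioo a b,
      HasDerivAt (fun s => -(b - s) ^ (γ + 1) / (γ + 1)) ((b - x) ^ γ) x := by
    intro x hx
    refine ((((hasDerivAt_id x).const_sub b).rpow_const (p := γ + 1)
      (Or.inl (sub_pos.2 hx.2).ne')).neg.div_const (γ + 1)).congr_deriv ?_
    field_simp
    simp
  have hker : IntervalIntegrable (fun s => (b - s) ^ γ) volume a b := by
    simpa using
      (intervalIntegral.intervalIntegrable_rpow' hγ (a := b - a) (b := 0)).comp_sub_left b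
  have hfc : ContinuousOn f (uIcc a b) :=
    uIcc_of_le hab ▸ fun x hx => (hf x hx).continuousAt.continuousWithinAt
  have hibp := intervalIntegral.integral_mul_deriv_eq_deriv_mul_of_hasDeriv_right
    (u := f) (v := fun s => -(b - s) ^ (γ + 1) / (γ + 1)) (u' := f') (v' := fun s => (b - s) ^ γ)
    hfc
    (((continuous_const.sub continuous_id).rpow_const fun _ => Or.inr (by linarith)).neg.div_const
        _).continuousOn
    (fun x hx => (hf x (Ioo_subset_Icc_self (hIoo ▸ hx))).hasDerivWithinAt)
    (fun x hx => (hw x (hIoo ▸ hx)).hasDerivWithinAt)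
    (hf'.intervalIntegrable_of_Icc hab) hker
  simp only [intervalIntegral.integral_of_le hab, integral_Ioc_eq_integral_Ioo, sub_self,
    zero_rpow hγ1] at hibp
  unfold forwardRLIntegral
  rw [hibp]
  simp only [neg_div, mul_neg, ← mul_div_assoc, integral_neg, integral_div]
  ring

theorem backwardRLIntegral_eq_of_hasDerivAt (hγ : -1 < γ) (hab : a ≤ b) {g' : ℝ → ℝ}
    (hg : ∀ x ∈ Icc a b, HasDerivAt g (g' x) x) (hg' : ContinuousOn g' (Icc a b)) :
    backwardRLIntegral γ b g a
      = (g b * (b - a) ^ (γ + 1) - backwardRLIntegral (γ + 1) b g' a) / (γ + 1) := by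
  have hγ1 : γ + 1 ≠ 0 := by linarith
  have hIoo : Ioo (min a b) (max a b) = Ioo a b := by rw [min_eq_left hab, max_eq_right hab]
  -- an antiderivative of the kernel that vanishes at `a`, so only the boundary term at `b` survives
  have hw : ∀ x ∈ Ioo a b,
      HasDerivAt (fun t => (t - a) ^ (γ + 1) / (γ + 1)) ((x - a) ^ γ) x := by
    intro x hx
    refine ((((hasDerivAt_id x).sub_const a).rpow_const (p := γ + 1)
      (Or.inl (sub_pos.2 hx.1).ne')).div_const (γ + 1)).congr_deriv ?_
    field_simp
    simp
  have hker : IntervalIntegrable (fun t => (t - a) ^ γ) volume a b := by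
    simpa using
      (intervalIntegral.intervalIntegrable_rpow' hγ (a := 0) (b := b - a)).comp_sub_right a
  have hgc : ContinuousOn g (uIcc a b) :=
    uIcc_of_le hab ▸ fun x hx => (hg x hx).continuousAt.continuousWithinAt
  have hibp := intervalIntegral.integral_mul_deriv_eq_deriv_mul_of_hasDeriv_right
    (u := g) (v := fun t => (t - a) ^ (γ + 1) / (γ + 1)) (u' := g') (v' := fun t => (t - a) ^ γ)
    hgc
    (((continuous_id.sub continuous_const).rpow_const fun _ => Or.inr (by linarith)).div_const
      _).continuousOn
    (fun x hx => (hg x (Ioo_subset_Icc_self (hIoo ▸ hx))).hasDerivWithinAt)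
    (fun x hx => (hw x (hIoo ▸ hx)).hasDerivWithinAt)
    (hg'.intervalIntegrable_of_Icc hab) hker
  simp only [intervalIntegral.integral_of_le hab, integral_Ioc_eq_integral_Ioo, sub_self,
    zero_rpow hγ1] at hibp
  unfold backwardRLIntegral
  rw [hibp]
  simp only [← mul_div_assoc, integral_div]
  ring

theorem integral_mul_forwardRLIntegral_eq (hγ : -1 < γ) {g' : ℝ → ℝ}
    (hf : ContinuousOn f (Icc a b)) (hg : ∀ x ∈ Icc a b, HasDerivAt g (g' x) x)
    (hg' : ContinuousOn g' (Icc a b)) :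
    ∫ t in Ioo a b, g t * forwardRLIntegral γ a f t
      = (g b * forwardRLIntegral (γ + 1) a f b
          - ∫ s in Ioo a b, f s * backwardRLIntegral (γ + 1) b g' s) / (γ + 1) := by
  have hgc : ContinuousOn g (Icc a b) := fun x hx => (hg x hx).continuousAt.continuousWithinAt
  have hclosed : ∀ s ∈ Ioo a b, f s * backwardRLIntegral γ b g s
      = (g b * (f s * (b - s) ^ (γ + 1)) - f s * backwardRLIntegral (γ + 1) b g' s)
          / (γ + 1) := by
    intro s hs
    have hsub : Icc s b ⊆ Icc a b := Icc_subset_Icc_left hs.1.le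
    rw [backwardRLIntegral_eq_of_hasDerivAt hγ hs.2.le (fun x hx => hg x (hsub hx))
      (hg'.mono hsub)]
    ring
  have hint : IntegrableOn (fun s => g b * (f s * (b - s) ^ (γ + 1))) (Ioo a b) :=
    ((hf.mul ((continuous_const.sub continuous_id).rpow_const
      fun _ => Or.inr (by linarith)).continuousOn).integrableOn_Icc.mono_set
        Ioo_subset_Icc_self).const_mul _
  rw [integral_mul_forwardRLIntegral hγ hf hgc,
    setIntegral_congr_fun measurableSet_Ioo hclosed,
    integral_div, integral_sub hint (integrableOn_mul_backwardRLIntegral (by linarith) hf hg'),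
    integral_const_mul]
  rfl

theorem integral_mul_backwardRLIntegral_eq (hγ : -1 < γ) {f' : ℝ → ℝ}
    (hf : ∀ x ∈ Icc a b, HasDerivAt f (f' x) x) (hf' : ContinuousOn f' (Icc a b))
    (hg : ContinuousOn g (Icc a b)) :
    ∫ t in Ioo a b, f t * backwardRLIntegral γ b g t
      = (f a * backwardRLIntegral (γ + 1) b g a
          + ∫ s in Ioo a b, g s * forwardRLIntegral (γ + 1) a f' s) / (γ + 1) := by
  have hfc : ContinuousOn f (Icc a b) := fun x hx => (hf x hx).continuousAt.continuousWithinAt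
  have hclosed : ∀ s ∈ Ioo a b, g s * forwardRLIntegral γ a f s
      = (f a * (g s * (s - a) ^ (γ + 1)) + g s * forwardRLIntegral (γ + 1) a f' s)
          / (γ + 1) := by
    intro s hs
    have hsub : Icc a s ⊆ Icc a b := Icc_subset_Icc_right hs.2.le
    rw [forwardRLIntegral_eq_of_hasDerivAt hγ hs.1.le (fun x hx => hf x (hsub hx))
      (hf'.mono hsub)]
    ring
  have hint : IntegrableOn (fun s => f a * (g s * (s - a) ^ (γ + 1))) (Ioo a b) :=
    ((hg.mul ((continuous_id.sub continuous_const).rpow_const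
      fun _ => Or.inr (by linarith)).continuousOn).integrableOn_Icc.mono_set
        Ioo_subset_Icc_self).const_mul _
  rw [← integral_mul_forwardRLIntegral hγ hfc hg,
    setIntegral_congr_fun measurableSet_Ioo hclosed,
    integral_div, integral_add hint (integrableOn_mul_forwardRLIntegral (by linarith) hf' hg),
    integral_const_mul]
  rfl

theorem integral_mul_forwardRLIntegral_deriv_add_eq (hγ : -1 < γ) (hab : a ≤ b) {f' g' : ℝ → ℝ}
    (hf : ∀ x ∈ Icc a b, HasDerivAt f (f' x) x) (hf' : ContinuousOn f' (Icc a b))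
    (hg : ∀ x ∈ Icc a b, HasDerivAt g (g' x) x) (hg' : ContinuousOn g' (Icc a b)) :
    (∫ t in Ioo a b, g t * forwardRLIntegral γ a f' t) + f a * backwardRLIntegral γ b g a
      = -(∫ t in Ioo a b, f t * backwardRLIntegral γ b g' t)
        + g b * forwardRLIntegral γ a f b := by
  rw [integral_mul_forwardRLIntegral_eq hγ hf' hg hg',
    integral_mul_backwardRLIntegral_eq hγ hf hf' hg',
    forwardRLIntegral_eq_of_hasDerivAt hγ hab hf hf',
    backwardRLIntegral_eq_of_hasDerivAt hγ hab hg hg',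
    integral_mul_forwardRLIntegral (by linarith) hf' hg']
  ring

end RLIntegral

end RiemannLiouville

/-- Integration by parts with Riemann–Liouville boundary terms:
`∫₀^τ v ∂^β_{(0,t]}u dt + u(0)(I^{1−β}_{[0,τ)}v)(0)
  = ∫₀^τ u ∂^β_{[t,τ)}v dt + v(τ)(I^{1−β}_{(0,τ]}u)(τ)`. -/
theorem caputo_int_by_parts_RL (β τ : ℝ) (hβ : β ∈ Set.Ioo (0:ℝ) 1) (hτ : 0 < τ)
    (u v u' v' : ℝ → ℝ)
    (hu : ∀ t ∈ Set.Icc 0 τ, HasDerivAt u (u' t) t)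
    (hu' : ContinuousOn u' (Set.Icc 0 τ))
    (hv : ∀ t ∈ Set.Icc 0 τ, HasDerivAt v (v' t) t)
    (hv' : ContinuousOn v' (Set.Icc 0 τ)) :
    (∫ t in Set.Ioo 0 τ,
        v t * ((1 / Real.Gamma (1 - β)) * ∫ s in Set.Ioo 0 t, u' s * (t - s) ^ (-β)))
      + u 0 * ((1 / Real.Gamma (1 - β)) * ∫ s in Set.Ioo 0 τ, v s * (s - 0) ^ (-β))
      = (∫ t in Set.Ioo 0 τ,
          u t * (-(1 / Real.Gamma (1 - β)) * ∫ s in Set.Ioo t τ, v' s * (s - t) ^ (-β)))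
        + v τ * ((1 / Real.Gamma (1 - β)) * ∫ s in Set.Ioo 0 τ, u s * (τ - s) ^ (-β)) := by
  have key := RiemannLiouville.integral_mul_forwardRLIntegral_deriv_add_eq (γ := -β)
    (by linarith [hβ.2]) hτ.le hu hu' hv hv'
  unfold RiemannLiouville.forwardRLIntegral RiemannLiouville.backwardRLIntegral at key
  simp_rw [mul_left_comm (v _), mul_left_comm (u _), integral_const_mul]
  linear_combination (1 / Gamma (1 - β)) * key
end

section
/- Let β ∈ (0,1) and ρ ∈ C¹([0,τ]). Then for every t ∈ [0,τ), the backward Caputo derivative satisfies the convexity inequality (1/2) ∂^β_{[t,τ)} (ρ²)(t) ≤ ρ(t) · ∂^β_{[t,τ)} ρ(t), where ∂^β_{[t,τ)} v(t) = −(1/Γ(1−β)) ∫ₜ^τ v'(s)(s−t)^{−β} ds. -/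
/-!
Since `ρ ρ' - ρ(t) ρ' = w'/2` with `w(s) = (ρ(s) - ρ(t))²`, the inequality amounts to
`∫ₜ^τ w'(s) (s-t)^{-β} ds ≥ 0`. On `[a, τ]` with `a > t`, integration by parts bounds this
integral below by `-w(a) (a-t)^{-β}`, because `w ≥ 0` and the kernel is decreasing; as `a → t⁺`
this boundary term vanishes, since `w(a) = O((a-t)²)` and `β < 2`.
-/

open Set MeasureTheory Real Filter Topology

theorem intervalIntegrable_mul_sub_rpow_neg {φ : ℝ → ℝ} {t τ β : ℝ} (hβ : β < 1)
    (hφ : ContinuousOn φ (uIcc t τ)) :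
    IntervalIntegrable (fun s => φ s * (s - t) ^ (-β)) volume t τ := by
  have hker : IntervalIntegrable (fun s => (s - t) ^ (-β)) volume t τ := by
    simpa using (intervalIntegral.intervalIntegrable_rpow' (a := t - t) (b := τ - t)
      (r := -β) (by linarith)).comp_sub_right t
  exact hker.continuousOn_mul hφ

theorem mul_sub_mul_le_integral_deriv_mul {u v u' v' : ℝ → ℝ} {a b : ℝ} (hab : a ≤ b)
    (hu : ContinuousOn u (Icc a b)) (hv : ContinuousOn v (Icc a b))
    (huu' : ∀ x ∈ Ioo a b, HasDerivAt u (u' x) x) (hvv' : ∀ x ∈ Ioo a b, HasDerivAt v (v' x) x)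
    (hu' : IntervalIntegrable u' volume a b) (hv' : IntervalIntegrable v' volume a b)
    (hu0 : ∀ x ∈ Icc a b, 0 ≤ u x) (hv'0 : ∀ x ∈ Icc a b, v' x ≤ 0) :
    u b * v b - u a * v a ≤ ∫ x in a..b, u' x * v x := by
  rw [← uIcc_of_le hab] at hu hv
  have hparts := intervalIntegral.integral_deriv_mul_eq_sub_of_hasDerivAt hu hv
    (by simpa only [min_eq_left hab, max_eq_right hab] using huu')
    (by simpa only [min_eq_left hab, max_eq_right hab] using hvv') hu' hv'
  rw [intervalIntegral.integral_add (hu'.mul_continuousOn hv) (hv'.continuousOn_mul hu)] at hparts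
  have hneg : ∫ x in a..b, u x * v' x ≤ 0 := by
    simpa using intervalIntegral.integral_nonneg hab
      fun x hx => neg_nonneg.2 (mul_nonpos_of_nonneg_of_nonpos (hu0 x hx) (hv'0 x hx))
  linarith

theorem tendsto_intervalIntegral_nhdsGT {f : ℝ → ℝ} {t τ : ℝ} (htτ : t < τ)
    (hf : IntervalIntegrable f volume t τ) :
    Tendsto (fun a => ∫ x in a..τ, f x) (𝓝[>] t) (𝓝 (∫ x in t..τ, f x)) := by
  rw [intervalIntegrable_iff_integrableOn_Icc_of_le htτ.le, ← uIcc_of_le htτ.le] at hf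
  have hcont := intervalIntegral.continuousOn_primitive_interval_left hf t left_mem_uIcc
  rw [uIcc_of_le htτ.le] at hcont
  exact hcont.mono_of_mem_nhdsWithin (Icc_mem_nhdsGT htτ)

theorem HasDerivAt.tendsto_sq_sub_mul_rpow_nhdsGT {f : ℝ → ℝ} {f' t β : ℝ}
    (hf : HasDerivAt f f' t) (hβ : β < 2) :
    Tendsto (fun a => (f a - f t) ^ 2 * (a - t) ^ (-β)) (𝓝[>] t) (𝓝 0) := by
  have hslope : Tendsto (slope f t) (𝓝[>] t) (𝓝 f') :=
    (hasDerivAt_iff_tendsto_slope.1 hf).mono_left (nhdsWithin_mono _ fun x hx => ne_of_gt hx)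
  have hpow : Tendsto (fun a => (a - t) ^ (2 - β)) (𝓝[>] t) (𝓝 0) := by
    have h := ((continuous_sub_right t).tendsto t).mono_left (nhdsWithin_le_nhds (s := Ioi t))
    rw [sub_self] at h
    have hcomp := (Real.continuousAt_rpow_const 0 (2 - β) (Or.inr (by linarith))).tendsto.comp h
    rwa [Real.zero_rpow (by linarith)] at hcomp
  have hlim := (hslope.pow 2).mul hpow
  rw [mul_zero] at hlim
  refine hlim.congr' (eventually_nhdsWithin_of_forall fun a (ha : t < a) => ?_)
  have hat : 0 < a - t := sub_pos.2 ha
  rw [slope_def_field, div_pow, show 2 - β = 2 + -β by ring, Real.rpow_add hat, Real.rpow_two]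
  field_simp

theorem integral_deriv_mul_sub_rpow_neg_nonneg {w w' : ℝ → ℝ} {t τ β : ℝ} (htτ : t < τ)
    (hβ : β ∈ Ico 0 1) (hw : ∀ x ∈ Ioc t τ, HasDerivAt w (w' x) x)
    (hw' : ContinuousOn w' (Icc t τ)) (hw0 : ∀ x ∈ Ioc t τ, 0 ≤ w x)
    (hlim : Tendsto (fun a => w a * (a - t) ^ (-β)) (𝓝[>] t) (𝓝 0)) :
    0 ≤ ∫ x in t..τ, w' x * (x - t) ^ (-β) := by
  have hker : ∀ x ∈ Ioi t, HasDerivAt (fun x => (x - t) ^ (-β)) (-β * (x - t) ^ (-β - 1)) x :=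
    fun x hx => by
      simpa using ((hasDerivAt_id x).sub_const t).rpow_const (p := -β) (Or.inl (sub_pos.2 hx).ne')
  have hint := intervalIntegrable_mul_sub_rpow_neg hβ.2 ((uIcc_of_le htτ.le).symm ▸ hw')
  have htrunc : ∀ᶠ a in 𝓝[>] t, -(w a * (a - t) ^ (-β)) ≤ ∫ x in a..τ, w' x * (x - t) ^ (-β) := by
    filter_upwards [Ioo_mem_nhdsGT htτ] with a ⟨hta, haτ⟩
    have hsub : Icc a τ ⊆ Ioc t τ := Icc_subset_Ioc_iff haτ.le |>.2 ⟨hta, le_rfl⟩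
    have hparts := mul_sub_mul_le_integral_deriv_mul haτ.le
      (fun x hx => (hw x (hsub hx)).continuousAt.continuousWithinAt)
      (fun x hx => (hker x (hsub hx).1).continuousAt.continuousWithinAt)
      (fun x hx => hw x (hsub (Ioo_subset_Icc_self hx)))
      (fun x hx => hker x (hsub (Ioo_subset_Icc_self hx)).1)
      ((hw'.mono (hsub.trans Ioc_subset_Icc_self)).intervalIntegrable_of_Icc haτ.le)
      (ContinuousOn.intervalIntegrable_of_Icc haτ.le fun x hx =>
        (continuousAt_const.mul ((continuousAt_id.sub continuousAt_const).rpow_const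
          (Or.inl (sub_pos.2 (hsub hx).1).ne'))).continuousWithinAt)
      (fun x hx => hw0 x (hsub hx))
      (fun x hx => mul_nonpos_of_nonpos_of_nonneg (neg_nonpos.2 hβ.1)
        (rpow_nonneg (sub_pos.2 (hsub hx).1).le _))
    have hend : 0 ≤ w τ * (τ - t) ^ (-β) :=
      mul_nonneg (hw0 τ ⟨htτ, le_rfl⟩) (rpow_nonneg (sub_pos.2 htτ).le _)
    linarith
  simpa using le_of_tendsto_of_tendsto hlim.neg (tendsto_intervalIntegral_nhdsGT htτ hint) htrunc

theorem backward_caputo_sq_le_general (β τ : ℝ) (hβ : β ∈ Set.Ioo (0:ℝ) 1)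
    (ρ ρ' : ℝ → ℝ)
    (hρ : ∀ t ∈ Set.Icc 0 τ, HasDerivAt ρ (ρ' t) t)
    (hρ' : ContinuousOn ρ' (Set.Icc 0 τ)) :
    ∀ t ∈ Set.Ico 0 τ,
      (1 / 2) * (-(1 / Real.Gamma (1 - β)) *
          ∫ s in Set.Ioo t τ, deriv (fun r => ρ r ^ 2) s * (s - t) ^ (-β))
        ≤ ρ t * (-(1 / Real.Gamma (1 - β)) *
            ∫ s in Set.Ioo t τ, ρ' s * (s - t) ^ (-β)) := by
  rintro t ⟨ht0, htτ⟩
  have hρt : ∀ s ∈ Icc t τ, HasDerivAt ρ (ρ' s) s := fun s hs => hρ s ⟨ht0.trans hs.1, hs.2⟩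
  have hρc : ContinuousOn ρ (Icc t τ) := fun s hs => (hρt s hs).continuousAt.continuousWithinAt
  have hρ't : ContinuousOn ρ' (Icc t τ) := hρ'.mono (Icc_subset_Icc_left ht0)
  have hint : ∀ {φ : ℝ → ℝ}, ContinuousOn φ (Icc t τ) →
      IntervalIntegrable (fun s => φ s * (s - t) ^ (-β)) volume t τ := fun hφ =>
    intervalIntegrable_mul_sub_rpow_neg hβ.2 (by rwa [uIcc_of_le htτ.le])
  have hsq : ∀ s ∈ Ioo t τ,
      deriv (fun r => ρ r ^ 2) s * (s - t) ^ (-β) = 2 * ρ s * ρ' s * (s - t) ^ (-β) := by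
    intro s hs
    rw [((hρt s (Ioo_subset_Icc_self hs)).fun_pow 2).deriv]
    ring
  rw [setIntegral_congr_fun measurableSet_Ioo hsq]
  simp only [← integral_Ioc_eq_integral_Ioo, ← intervalIntegral.integral_of_le htτ.le]
  have hkey : 0 ≤ ∫ s in t..τ, 2 * (ρ s - ρ t) * ρ' s * (s - t) ^ (-β) :=
    integral_deriv_mul_sub_rpow_neg_nonneg htτ ⟨hβ.1.le, hβ.2⟩
      (fun s hs => by
        simpa using ((hρt s (Ioc_subset_Icc_self hs)).sub_const (ρ t)).fun_pow 2)
      ((continuousOn_const.mul (hρc.sub continuousOn_const)).mul hρ't)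
      (fun s _ => sq_nonneg _)
      ((hρt t (left_mem_Icc.2 htτ.le)).tendsto_sq_sub_mul_rpow_nhdsGT (by linarith [hβ.2]))
  have hsplit : ∫ s in t..τ, 2 * (ρ s - ρ t) * ρ' s * (s - t) ^ (-β)
      = (∫ s in t..τ, 2 * ρ s * ρ' s * (s - t) ^ (-β))
        - 2 * ρ t * ∫ s in t..τ, ρ' s * (s - t) ^ (-β) := by
    rw [← intervalIntegral.integral_const_mul, ← intervalIntegral.integral_sub
      (hint (φ := fun s => 2 * ρ s * ρ' s) ((continuousOn_const.mul hρc).mul hρ't))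
      ((hint hρ't).const_mul _)]
    congr 1 with s
    ring
  have hΓ : 0 < 1 / Gamma (1 - β) := one_div_pos.2 (Gamma_pos_of_pos (by linarith [hβ.2]))
  rw [hsplit] at hkey
  nlinarith [mul_nonneg hΓ.le hkey]

/-- Convexity inequality for the backward Caputo derivative:
`(1/2) ∂^β_{[t,τ)}(ρ²)(t) ≤ ρ(t) ∂^β_{[t,τ)}ρ(t)` for `t ∈ [0,τ)`. -/
theorem backward_caputo_sq_le (β τ : ℝ) (hβ : β ∈ Set.Ioo (0:ℝ) 1) (hτ : 0 < τ)
    (ρ ρ' : ℝ → ℝ)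
    (hρ : ∀ t ∈ Set.Icc 0 τ, HasDerivAt ρ (ρ' t) t)
    (hρ' : ContinuousOn ρ' (Set.Icc 0 τ)) :
    ∀ t ∈ Set.Ico 0 τ,
      (1 / 2) * (-(1 / Real.Gamma (1 - β)) *
          ∫ s in Set.Ioo t τ, deriv (fun r => ρ r ^ 2) s * (s - t) ^ (-β))
        ≤ ρ t * (-(1 / Real.Gamma (1 - β)) *
            ∫ s in Set.Ioo t τ, ρ' s * (s - t) ^ (-β)) :=
  backward_caputo_sq_le_general β τ hβ ρ ρ' hρ hρ'
end

section
/- Let β ∈ (0,1) and u ∈ C¹([0,τ]). Then for every convex differentiable function Φ : ℝ → ℝ and t ∈ (0,τ], one has ∂^β_{(0,t]} (Φ ∘ u)(t) ≤ Φ'(u(t)) · ∂^β_{(0,t]} u(t), where ∂^β_{(0,t]} denotes the forward Caputo derivative of order β. -/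
/-!
With `c = Φ'(u t)`, the gradient inequality for `Φ` says that `g = c • u - Φ ∘ u` attains
its maximum over `[0, t]` at `t`, and the claim is `∫₀ᵗ g'(s) (t - s)^(-β) ds ≥ 0`. This
holds for every `C¹` function `g` with that property:
`H r = ∫ᵣᵗ g'(s) (t - s)^(-β) ds - (t - r)^(-β) (g t - g r)` has
`H' r = -β (t - r)^(-β-1) (g t - g r) ≤ 0` and `H r → 0` as `r → t⁻`, so
`∫₀ᵗ g'(s) (t - s)^(-β) ds = H 0 + t^(-β) (g t - g 0) ≥ 0`.
-/

open Set MeasureTheory Real Filter Topology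

lemma ConvexOn.mul_sub_le_sub_of_hasDerivAt {S : Set ℝ} {f : ℝ → ℝ} {f' x y : ℝ}
    (hfc : ConvexOn ℝ S f) (hx : x ∈ S) (hy : y ∈ S) (hf : HasDerivAt f f' y) :
    f' * (x - y) ≤ f x - f y := by
  rcases lt_trichotomy x y with hxy | rfl | hxy
  · have h := hfc.slope_le_of_hasDerivAt hx hy hxy hf
    rw [slope_def_field, div_le_iff₀ (sub_pos.2 hxy)] at h
    linarith
  · simp
  · have h := hfc.le_slope_of_hasDerivAt hy hx hxy hf
    rwa [slope_def_field, le_div_iff₀ (sub_pos.2 hxy)] at h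

lemma integrableOn_sub_rpow_neg {β : ℝ} (hβ : β < 1) (a t : ℝ) :
    IntegrableOn (fun s => (t - s) ^ (-β)) (uIcc a t) := by
  have h := (intervalIntegral.intervalIntegrable_rpow' (a := 0) (b := t - a)
    (by linarith : (-1 : ℝ) < -β)).comp_sub_left t
  rw [sub_zero, sub_sub_cancel] at h
  exact (intervalIntegrable_iff' (μ := volume)).1 h.symm

lemma integrableOn_mul_sub_rpow_neg {f : ℝ → ℝ} {β a t : ℝ} (hβ : β < 1)
    (hf : ContinuousOn f (Icc a t)) :
    IntegrableOn (fun s => f s * (t - s) ^ (-β)) (Icc a t) :=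
  ((integrableOn_sub_rpow_neg hβ a t).mono_set Icc_subset_uIcc).continuousOn_mul hf isCompact_Icc

lemma tendsto_sub_rpow_neg_mul_sub_nhdsLT {g : ℝ → ℝ} {g' β t : ℝ} (hβ : β < 1)
    (hg : HasDerivAt g g' t) :
    Tendsto (fun r => (t - r) ^ (-β) * (g t - g r)) (𝓝[<] t) (𝓝 0) := by
  have hslope : Tendsto (slope g t) (𝓝[<] t) (𝓝 g') :=
    hg.tendsto_slope.mono_left (nhdsWithin_mono _ fun r hr => ne_of_lt hr)
  have hpow : Tendsto (fun r => (t - r) ^ (1 - β)) (𝓝[<] t) (𝓝 0) := by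
    have h := (Continuous.rpow_const (f := fun r => t - r) (by fun_prop)
      fun _ => Or.inr (by linarith : 0 ≤ 1 - β)).tendsto t
    simp only [sub_self, zero_rpow (by linarith : 1 - β ≠ 0)] at h
    exact h.mono_left nhdsWithin_le_nhds
  have h := hpow.mul hslope
  rw [zero_mul] at h
  refine h.congr' ?_
  filter_upwards [self_mem_nhdsWithin] with r (hr : r < t)
  have htr : 0 < t - r := sub_pos.2 hr
  rw [slope_comm, slope_def_field, sub_eq_add_neg 1 β, rpow_add htr, rpow_one]
  field_simp [htr.ne']

theorem integral_deriv_mul_sub_rpow_nonneg {g g' : ℝ → ℝ} {β a t : ℝ} (hβ0 : 0 ≤ β)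
    (hβ1 : β < 1) (hat : a < t) (hg : ∀ s ∈ Icc a t, HasDerivAt g (g' s) s)
    (hg' : ContinuousOn g' (Icc a t)) (hmax : ∀ s ∈ Icc a t, g s ≤ g t) :
    0 ≤ ∫ s in Ioo a t, g' s * (t - s) ^ (-β) := by
  set G : ℝ → ℝ := fun s => g' s * (t - s) ^ (-β)
  set K : ℝ → ℝ := fun r => (t - r) ^ (-β) * (g t - g r)
  set H : ℝ → ℝ := fun r => (∫ s in r..t, G s) - K r
  have hG : IntegrableOn G (Icc a t) := integrableOn_mul_sub_rpow_neg hβ1 hg'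
  have hK : ∀ r ∈ Ico a t, 0 ≤ K r := fun r hr =>
    mul_nonneg (rpow_nonneg (sub_pos.2 hr.2).le _)
      (sub_nonneg.2 (hmax r (Ico_subset_Icc_self hr)))
  have hG_cont : ∀ x ∈ Ioo a t, ContinuousAt G x := fun x hx =>
    (hg'.continuousAt (Icc_mem_nhds hx.1 hx.2)).mul
      ((continuousAt_const.sub continuousAt_id).rpow_const (Or.inl (sub_pos.2 hx.2).ne'))
  have hH_deriv : ∀ x ∈ Ioo a t,
      HasDerivAt H (-(β * (t - x) ^ (-β - 1) * (g t - g x))) x := by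
    intro x hx
    have hGx : IntegrableOn G (uIcc x t) := hG.mono_set <| by
      rw [uIcc_of_le hx.2.le]; exact Icc_subset_Icc_left hx.1.le
    have hF := intervalIntegral.integral_hasDerivAt_left hGx.intervalIntegrable
      (ContinuousAt.stronglyMeasurableAtFilter isOpen_Ioo hG_cont x hx) (hG_cont x hx)
    have hw := ((hasDerivAt_id x).const_sub t).rpow_const (p := -β)
      (Or.inl (sub_pos.2 hx.2).ne')
    have hK' : HasDerivAt K
        (-1 * -β * (t - x) ^ (-β - 1) * (g t - g x) + (t - x) ^ (-β) * -g' x) x :=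
      hw.mul ((hg x (Ioo_subset_Icc_self hx)).const_sub (g t))
    exact (hF.sub hK').congr_deriv (by ring)
  have hF_cont : ContinuousOn (fun r => ∫ s in r..t, G s) (Icc a t) := by
    simpa only [uIcc_of_le hat.le] using
      intervalIntegral.continuousOn_primitive_interval_left (a := a) (b := t)
        (by rwa [uIcc_of_le hat.le])
  have hH_cont : ContinuousOn H (Ico a t) := by
    intro x hx
    have hK_cont : ContinuousAt K x :=
      ((continuousAt_const.sub continuousAt_id).rpow_const (Or.inl (sub_pos.2 hx.2).ne')).mul
        (continuousAt_const.sub (hg x (Ico_subset_Icc_self hx)).continuousAt)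
    exact ((hF_cont x (Ico_subset_Icc_self hx)).mono Ico_subset_Icc_self).sub
      hK_cont.continuousWithinAt
  have hH_anti : AntitoneOn H (Ico a t) := by
    refine antitoneOn_of_deriv_nonpos (convex_Ico a t) hH_cont ?_ ?_ <;> rw [interior_Ico]
    · exact fun x hx => (hH_deriv x hx).differentiableAt.differentiableWithinAt
    · intro x hx
      rw [(hH_deriv x hx).deriv, neg_nonpos]
      exact mul_nonneg (mul_nonneg hβ0 (rpow_nonneg (sub_pos.2 hx.2).le _))
        (sub_nonneg.2 (hmax x (Ioo_subset_Icc_self hx)))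
  have hH_lim : Tendsto H (𝓝[<] t) (𝓝 0) := by
    have hF_lim : Tendsto (fun r => ∫ s in r..t, G s) (𝓝[<] t) (𝓝 0) := by
      simpa only [intervalIntegral.integral_same] using
        (((hF_cont t (right_mem_Icc.2 hat.le)).mono Ico_subset_Icc_self).mono_of_mem_nhdsWithin
          (Ico_mem_nhdsLT hat)).tendsto
    simpa only [sub_zero] using
      hF_lim.sub (tendsto_sub_rpow_neg_mul_sub_nhdsLT hβ1 (hg t (right_mem_Icc.2 hat.le)))
  have hH_nonneg : 0 ≤ H a := by
    refine le_of_tendsto hH_lim ?_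
    filter_upwards [Ico_mem_nhdsLT hat] with x hx
    exact hH_anti (left_mem_Ico.2 hat) hx hx.1
  rw [← integral_Ioc_eq_integral_Ioo, ← intervalIntegral.integral_of_le hat.le]
  linarith [hK a (left_mem_Ico.2 hat)]

theorem caputo_convex_chain_general (β τ : ℝ) (hβ : β ∈ Set.Ioo (0:ℝ) 1)
    (u u' : ℝ → ℝ)
    (hu : ∀ t ∈ Set.Icc 0 τ, HasDerivAt u (u' t) t)
    (hu' : ContinuousOn u' (Set.Icc 0 τ))
    (Φ Φ' : ℝ → ℝ)
    (hΦconv : ConvexOn ℝ Set.univ Φ)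
    (hΦ : ∀ x, HasDerivAt Φ (Φ' x) x)
    (hΦ' : Continuous Φ') :
    ∀ t ∈ Set.Ioc 0 τ,
      (1 / Real.Gamma (1 - β)) *
          (∫ s in Set.Ioo 0 t, deriv (fun r => Φ (u r)) s * (t - s) ^ (-β))
        ≤ Φ' (u t) *
            ((1 / Real.Gamma (1 - β)) * ∫ s in Set.Ioo 0 t, u' s * (t - s) ^ (-β)) := by
  rintro t ⟨ht0, htτ⟩
  have hu_t : ∀ s ∈ Icc 0 t, HasDerivAt u (u' s) s :=
    fun s hs => hu s (Icc_subset_Icc_right htτ hs)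
  have hu'_t : ContinuousOn u' (Icc 0 t) := hu'.mono (Icc_subset_Icc_right htτ)
  have hΦu : ∀ s ∈ Icc 0 t, HasDerivAt (fun r => Φ (u r)) (Φ' (u s) * u' s) s :=
    fun s hs => (hΦ (u s)).comp s (hu_t s hs)
  have hΦu' : ContinuousOn (fun s => Φ' (u s) * u' s) (Icc 0 t) :=
    (hΦ'.comp_continuousOn fun s hs => (hu_t s hs).continuousAt.continuousWithinAt).mul hu'_t
  have hg_max : ∀ s ∈ Icc 0 t, Φ' (u t) * u s - Φ (u s) ≤ Φ' (u t) * u t - Φ (u t) :=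
    fun s _ => by
      linarith [hΦconv.mul_sub_le_sub_of_hasDerivAt (mem_univ (u s)) (mem_univ (u t)) (hΦ (u t))]
  have key := integral_deriv_mul_sub_rpow_nonneg (g := fun r => Φ' (u t) * u r - Φ (u r))
    hβ.1.le hβ.2 ht0 (fun s hs => ((hu_t s hs).const_mul _).sub (hΦu s hs))
    ((continuousOn_const.mul hu'_t).sub hΦu') hg_max
  have hint {f : ℝ → ℝ} (hf : ContinuousOn f (Icc 0 t)) :
      IntegrableOn (fun s => f s * (t - s) ^ (-β)) (Ioo 0 t) :=
    (integrableOn_mul_sub_rpow_neg hβ.2 hf).mono_set Ioo_subset_Icc_self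
  simp only [sub_mul] at key
  rw [integral_sub (hint (f := fun s => Φ' (u t) * u' s) (continuousOn_const.mul hu'_t))
    (hint hΦu')] at key
  simp only [mul_assoc (Φ' (u t)), integral_const_mul] at key
  rw [setIntegral_congr_fun measurableSet_Ioo fun s hs => by
    rw [(hΦu s (Ioo_subset_Icc_self hs)).deriv]]
  have hΓ : 0 ≤ 1 / Real.Gamma (1 - β) :=
    one_div_nonneg.2 (Gamma_pos_of_pos (by linarith [hβ.2])).le
  nlinarith [mul_nonneg hΓ key]

/-- Convexity inequality for the forward Caputo derivative:
`∂^β_{(0,t]}(Φ∘u)(t) ≤ Φ'(u(t)) ∂^β_{(0,t]}u(t)` for convex differentiable `Φ`. -/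
theorem caputo_convex_chain (β τ : ℝ) (hβ : β ∈ Set.Ioo (0:ℝ) 1) (hτ : 0 < τ)
    (u u' : ℝ → ℝ)
    (hu : ∀ t ∈ Set.Icc 0 τ, HasDerivAt u (u' t) t)
    (hu' : ContinuousOn u' (Set.Icc 0 τ))
    (Φ Φ' : ℝ → ℝ)
    (hΦconv : ConvexOn ℝ Set.univ Φ)
    (hΦ : ∀ x, HasDerivAt Φ (Φ' x) x)
    (hΦ' : Continuous Φ') :
    ∀ t ∈ Set.Ioc 0 τ,
      (1 / Real.Gamma (1 - β)) *
          (∫ s in Set.Ioo 0 t, deriv (fun r => Φ (u r)) s * (t - s) ^ (-β))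
        ≤ Φ' (u t) *
            ((1 / Real.Gamma (1 - β)) * ∫ s in Set.Ioo 0 t, u' s * (t - s) ^ (-β)) :=
  caputo_convex_chain_general β τ hβ u u' hu hu' Φ Φ' hΦconv hΦ hΦ'
end

section
/- Let β ∈ (0,1). For a real-valued function v ∈ C¹([0,t]) attaining its maximum over [0,t] at the endpoint t, the forward Caputo derivative satisfies ∂^β_{(0,t]} v(t) ≥ 0, i.e. (1/Γ(1−β)) ∫₀ᵗ v'(τ)(t−τ)^{−β} dτ ≥ 0 whenever v(t) = max_{[0,t]} v. -/
open Set MeasureTheory Real Filter Topology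

/-! For `s < t` the kernel `w τ = (t - τ) ^ (-β)` is smooth and nondecreasing on `[0, s]`, so
integrating `w` by parts against `v - v t ≤ 0` gives
`∫₀ˢ v' w ≥ w s * (v s - v t) - w 0 * (v 0 - v t) ≥ -M * (t - s) ^ (1 - β)`,
where `M` bounds `|v'|` (the last step is the mean value inequality). Letting `s → t⁻` yields
`∫₀ᵗ v' w ≥ 0`, and `Γ(1 - β) > 0`. -/

theorem le_integral_mul_deriv_of_deriv_nonneg_of_le {a b c : ℝ} {w w' v v' : ℝ → ℝ}
    (hab : a ≤ b)
    (hw : ∀ x ∈ Icc a b, HasDerivAt w (w' x) x) (hv : ∀ x ∈ Icc a b, HasDerivAt v (v' x) x)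
    (hw'i : IntervalIntegrable w' volume a b) (hv'i : IntervalIntegrable v' volume a b)
    (hw'0 : ∀ x ∈ Icc a b, 0 ≤ w' x) (hvc : ∀ x ∈ Icc a b, v x ≤ c) :
    w b * (v b - c) - w a * (v a - c) ≤ ∫ x in a..b, w x * v' x := by
  rw [← uIcc_of_le hab] at hw hv
  have hibp := intervalIntegral.integral_mul_deriv_eq_deriv_mul_of_hasDerivWithinAt
    (fun x hx ↦ (hw x hx).hasDerivWithinAt)
    (fun x hx ↦ ((hv x hx).sub_const c).hasDerivWithinAt) hw'i hv'i
  have hrem : ∫ x in a..b, w' x * (v x - c) ≤ 0 := by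
    rw [← neg_nonneg, ← intervalIntegral.integral_neg]
    refine intervalIntegral.integral_nonneg hab fun x hx ↦ ?_
    nlinarith [hw'0 x hx, hvc x hx]
  linarith

theorem hasDerivAt_sub_rpow_neg {t τ : ℝ} (β : ℝ) (hτ : τ < t) :
    HasDerivAt (fun x ↦ (t - x) ^ (-β)) (β * (t - τ) ^ (-β - 1)) τ := by
  refine (((hasDerivAt_id' τ).const_sub t).rpow_const
    (Or.inl (sub_pos.2 hτ).ne')).congr_deriv ?_
  ring

theorem intervalIntegrable_sub_rpow_neg {β : ℝ} (hβ : β < 1) (a t : ℝ) :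
    IntervalIntegrable (fun x ↦ (t - x) ^ (-β)) volume a t := by
  simpa using ((intervalIntegral.intervalIntegrable_rpow' (r := -β) (a := t - a) (b := 0)
    (by linarith)).comp_sub_left t)

theorem neg_mul_rpow_le_integral_deriv_mul_sub_rpow_neg {a s t β M : ℝ} {v v' : ℝ → ℝ}
    (hβ : 0 ≤ β) (hs : s ∈ Ico a t)
    (hv : ∀ τ ∈ Icc a t, HasDerivAt v (v' τ) τ) (hv' : ContinuousOn v' (Icc a t))
    (hM : ∀ τ ∈ Icc a t, ‖v' τ‖ ≤ M) (hmax : ∀ τ ∈ Icc a t, v τ ≤ v t) :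
    -(M * (t - s) ^ (1 - β)) ≤ ∫ τ in a..s, v' τ * (t - τ) ^ (-β) := by
  have hts : 0 < t - s := sub_pos.2 hs.2
  have hsub : Icc a s ⊆ Icc a t := Icc_subset_Icc_right hs.2.le
  have hlt : ∀ τ ∈ Icc a s, τ < t := fun τ hτ ↦ hτ.2.trans_lt hs.2
  have hkernelDeriv : ContinuousOn (fun τ ↦ β * (t - τ) ^ (-β - 1)) (Icc a s) :=
    continuousOn_const.mul <| (continuousOn_const.sub continuousOn_id).rpow_const
      fun τ hτ ↦ Or.inl (sub_pos.2 (hlt τ hτ)).ne'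
  have hibp := le_integral_mul_deriv_of_deriv_nonneg_of_le (c := v t) hs.1
    (fun τ hτ ↦ hasDerivAt_sub_rpow_neg β (hlt τ hτ)) (fun τ hτ ↦ hv τ (hsub hτ))
    (hkernelDeriv.intervalIntegrable_of_Icc hs.1) ((hv'.mono hsub).intervalIntegrable_of_Icc hs.1)
    (fun τ hτ ↦ mul_nonneg hβ (rpow_nonneg (sub_pos.2 (hlt τ hτ)).le _))
    (fun τ hτ ↦ hmax τ (hsub hτ))
  have hlip : v t - v s ≤ M * (t - s) := by
    have := (convex_Icc a t).norm_image_sub_le_of_norm_hasDerivWithin_le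
      (fun x hx ↦ (hv x hx).hasDerivWithinAt) hM (hsub ⟨hs.1, le_rfl⟩)
      ⟨hs.1.trans hs.2.le, le_rfl⟩
    rw [Real.norm_eq_abs, Real.norm_eq_abs, abs_of_pos hts] at this
    exact (le_abs_self _).trans this
  have hstart : (t - a) ^ (-β) * (v a - v t) ≤ 0 :=
    mul_nonpos_of_nonneg_of_nonpos (rpow_nonneg (by linarith [hs.1, hs.2]) _)
      (sub_nonpos.2 (hmax a ⟨le_rfl, hs.1.trans hs.2.le⟩))
  have hend : -(M * (t - s) ^ (1 - β)) ≤ (t - s) ^ (-β) * (v s - v t) := by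
    have hsplit : (t - s) ^ (1 - β) = (t - s) ^ (-β) * (t - s) := by
      rw [show 1 - β = -β + 1 by ring, rpow_add_one hts.ne']
    rw [hsplit]
    nlinarith [rpow_nonneg hts.le (-β)]
  simp only [mul_comm (v' _)]
  linarith

theorem integral_nonneg_of_tendsto_zero_of_le {a b : ℝ} {f g : ℝ → ℝ} (hab : a < b)
    (hf : IntervalIntegrable f volume a b) (hg : Tendsto g (𝓝[<] b) (𝓝 0))
    (hgf : ∀ᶠ s in 𝓝[<] b, g s ≤ ∫ x in a..s, f x) :
    0 ≤ ∫ x in a..b, f x := by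
  have hprim : Tendsto (fun s ↦ ∫ x in a..s, f x) (𝓝[<] b) (𝓝 (∫ x in a..b, f x)) := by
    refine (intervalIntegral.continuousOn_primitive_interval' hf left_mem_uIcc b
      right_mem_uIcc).tendsto.mono_left (nhdsWithin_le_of_mem ?_)
    exact mem_of_superset (Ioo_mem_nhdsLT hab) (Ioo_subset_Icc_self.trans Icc_subset_uIcc)
  exact le_of_tendsto_of_tendsto hg hprim hgf

/-- Sign of the forward Caputo derivative at an endpoint maximum:
if `v ∈ C¹([0,t])` attains its maximum over `[0,t]` at `t`, then
`∂^β_{(0,t]}v(t) ≥ 0`. -/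
theorem caputo_nonneg_at_max (β t : ℝ) (hβ : β ∈ Set.Ioo (0:ℝ) 1) (ht : 0 < t)
    (v v' : ℝ → ℝ)
    (hv : ∀ τ ∈ Set.Icc 0 t, HasDerivAt v (v' τ) τ)
    (hv' : ContinuousOn v' (Set.Icc 0 t))
    (hmax : ∀ τ ∈ Set.Icc 0 t, v τ ≤ v t) :
    0 ≤ (1 / Real.Gamma (1 - β)) * ∫ τ in Set.Ioo 0 t, v' τ * (t - τ) ^ (-β) := by
  obtain ⟨M, hM⟩ := isCompact_Icc.exists_bound_of_continuousOn hv'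
  have hint : IntervalIntegrable (fun τ ↦ v' τ * (t - τ) ^ (-β)) volume 0 t :=
    (intervalIntegrable_sub_rpow_neg hβ.2 0 t).continuousOn_mul (by rwa [uIcc_of_le ht.le])
  have hremainder : Tendsto (fun s ↦ -(M * (t - s) ^ (1 - β))) (𝓝[<] t) (𝓝 0) := by
    have hexp : 0 < 1 - β := sub_pos.2 hβ.2
    have hcont : ContinuousAt (fun s ↦ -(M * (t - s) ^ (1 - β))) t :=
      (((continuousAt_const.sub continuousAt_id).rpow_const (Or.inr hexp.le)).const_mul M).neg
    simpa [zero_rpow hexp.ne'] using hcont.tendsto.mono_left nhdsWithin_le_nhds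
  have hnonneg := integral_nonneg_of_tendsto_zero_of_le ht hint hremainder <|
    eventually_of_mem (Ioo_mem_nhdsLT ht) fun s hs ↦
      neg_mul_rpow_le_integral_deriv_mul_sub_rpow_neg hβ.1.le ⟨hs.1.le, hs.2⟩ hv hv' hM hmax
  rw [← integral_Ioc_eq_integral_Ioo, ← intervalIntegral.integral_of_le ht.le]
  exact mul_nonneg (one_div_nonneg.2 (Gamma_pos_of_pos (sub_pos.2 hβ.2)).le) hnonneg
end
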